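/- arXiv:2107.12315 — 5 statements merged into one kernel-verified Lean document; each statement's English description precedes it below -/
import Mathlib

section
/- Let G be a connected graph with vertices {1,...,N} and let F be a face of the symmetric edge polytope ∇_G = conv{±(e_i - e_j) : {i,j} ∈ E(G)} ⊂ ℝ^N. Then the subgraph G_F of G whose edges are the {i,j} with e_i - e_j ∈ F or e_j - e_i ∈ F is bipartite. -/
/-! If `α` supports the face `F`, every edge `{i, j}` of `G_F` satisfies `α i - α j = ±1`
(as `⟨e_i - e_j, α⟩ = α i - α j`), so the parity of `⌊α i⌋` is a proper 2-colouring of `G_F`. -/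

noncomputable def stdBasis {N : ℕ} (i : Fin N) : Fin N → ℝ := Pi.single i 1

def nabla {N : ℕ} (G : SimpleGraph (Fin N)) : Set (Fin N → ℝ) :=
  {x | ∃ i j, G.Adj i j ∧ x = stdBasis i - stdBasis j}

noncomputable def inn {N : ℕ} (x α : Fin N → ℝ) : ℝ := ∑ i, x i * α i

def IsFace {N : ℕ} (G : SimpleGraph (Fin N)) (F : Set (Fin N → ℝ)) : Prop :=
  ∃ α : Fin N → ℝ, (∀ x ∈ nabla G, -1 ≤ inn x α) ∧
    F = {x | x ∈ nabla G ∧ inn x α = -1}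

def IsFacet {N : ℕ} (G : SimpleGraph (Fin N)) (F : Set (Fin N → ℝ)) : Prop :=
  IsFace G F ∧ Module.finrank ℝ (vectorSpan ℝ F) = N - 2

def faceGraph {N : ℕ} (F : Set (Fin N → ℝ)) : SimpleGraph (Fin N) :=
  SimpleGraph.fromRel (fun i j => stdBasis i - stdBasis j ∈ F)

def MaxBipartiteSubgraph {N : ℕ} (G H : SimpleGraph (Fin N)) : Prop :=
  H ≤ G ∧ H.Colorable 2 ∧ ∀ H', H' ≤ G → H'.Colorable 2 → H ≤ H' → H' = H

def inducedOn {N : ℕ} (G : SimpleGraph (Fin N)) (s : Set (Fin N)) : SimpleGraph (Fin N) where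
  Adj i j := G.Adj i j ∧ i ∈ s ∧ j ∈ s
  symm := by constructor; intro i j h; exact ⟨h.1.symm, h.2.2, h.2.1⟩
  loopless := by constructor; intro i h; exact G.irrefl h.1

theorem inn_stdBasis_sub_stdBasis {N : ℕ} (i j : Fin N) (α : Fin N → ℝ) :
    inn (stdBasis i - stdBasis j) α = α i - α j := by
  simp [inn, stdBasis, sub_mul, Finset.sum_sub_distrib, Pi.single_apply]

theorem SimpleGraph.colorable_two_of_adj_sub_eq_one {V : Type*} (H : SimpleGraph V) (f : V → ℝ)
    (hf : ∀ i j, H.Adj i j → f i - f j = 1 ∨ f j - f i = 1) : H.Colorable 2 := by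
  have hfloor : ∀ i j, f i - f j = 1 → (⌊f i⌋ : ZMod 2) ≠ ⌊f j⌋ := by
    intro i j hij hc
    rw [show f i = f j + 1 by linarith, Int.floor_add_one] at hc
    push_cast at hc
    simp at hc
  let c : H.Coloring (ZMod 2) := SimpleGraph.Coloring.mk (fun v => (⌊f v⌋ : ZMod 2)) fun {i j} h =>
    (hf i j h).elim (hfloor i j) fun hji => (hfloor j i hji).symm
  simpa using c.colorable

theorem faceGraph_adj_sub_eq_one {N : ℕ} {G : SimpleGraph (Fin N)} {α : Fin N → ℝ}
    {F : Set (Fin N → ℝ)} (hFα : F = {x | x ∈ nabla G ∧ inn x α = -1}) {i j : Fin N}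
    (h : (faceGraph F).Adj i j) : α i - α j = 1 ∨ α j - α i = 1 := by
  obtain ⟨-, hij | hji⟩ := h
  · have := (hFα ▸ hij).2
    rw [inn_stdBasis_sub_stdBasis] at this
    right; linarith
  · have := (hFα ▸ hji).2
    rw [inn_stdBasis_sub_stdBasis] at this
    left; linarith

theorem stmt4_general {N : ℕ} (G : SimpleGraph (Fin N))
    (F : Set (Fin N → ℝ)) (hF : IsFace G F) :
    (faceGraph F).Colorable 2 := by
  obtain ⟨α, -, hFα⟩ := hF
  exact (faceGraph F).colorable_two_of_adj_sub_eq_one α fun _ _ => faceGraph_adj_sub_eq_one hFα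

theorem stmt4 {N : ℕ} (G : SimpleGraph (Fin N)) (hG : G.Connected)
    (F : Set (Fin N → ℝ)) (hF : IsFace G F) :
    (faceGraph F).Colorable 2 :=
  stmt4_general G F hF
end

section
/- Let G be a connected graph and α a facet inner normal with ⟨x,α⟩ ≥ −1 for all x ∈ ∇_G and ⟨x,α⟩ = −1 exactly for x in the facet F. Then every cycle i_1 ↔ i_2 ↔ ... ↔ i_ℓ ↔ i_1 contained in the face subgraph G_F has even length ℓ. -/
theorem SimpleGraph.colorable_two_of_abs_sub_eq_one {V : Type*} {G : SimpleGraph V} (f : V → ℝ)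
    (hf : ∀ a b, G.Adj a b → |f a - f b| = 1) : G.Colorable 2 := by
  have hflip : ∀ a b, G.Adj a b → (Even ⌊f a⌋ ↔ ¬Even ⌊f b⌋) := by
    intro a b hab
    rcases abs_eq (zero_le_one' ℝ) |>.mp (hf a b hab) with h | h
    · rw [show f a = f b + 1 by linarith, Int.floor_add_one, Int.even_add_one]
    · rw [show f b = f a + 1 by linarith, Int.floor_add_one, Int.even_add_one, not_not]
  let c : G.Coloring Bool :=
    Coloring.mk (fun v => decide (Even ⌊f v⌋)) fun {a b} hab => by
      rw [ne_eq, decide_eq_decide, hflip a b hab]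
      exact not_iff_self
  exact c.colorable

theorem abs_sub_eq_one_of_faceGraph_adj {N : ℕ} {F : Set (Fin N → ℝ)} {α : Fin N → ℝ}
    (hF : ∀ x ∈ F, inn x α = -1) {a b : Fin N} (hab : (faceGraph F).Adj a b) :
    |α a - α b| = 1 := by
  rcases (SimpleGraph.fromRel_adj _ a b).mp hab with ⟨-, h | h⟩
  · rw [← inn_stdBasis_sub_stdBasis, hF _ h, abs_neg, abs_one]
  · rw [abs_sub_comm, ← inn_stdBasis_sub_stdBasis, hF _ h, abs_neg, abs_one]

theorem stmt5_general {N : ℕ} (G : SimpleGraph (Fin N))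
    (α : Fin N → ℝ) (F : Set (Fin N → ℝ))
    (hFdef : F = {x | x ∈ nabla G ∧ inn x α = -1})
    (v : Fin N) (c : (faceGraph F).Walk v v) :
    Even c.length := by
  have hF : ∀ x ∈ F, inn x α = -1 := fun x hx => by
    rw [hFdef] at hx
    exact hx.2
  have hbip : (faceGraph F).Colorable 2 :=
    SimpleGraph.colorable_two_of_abs_sub_eq_one α fun _ _ => abs_sub_eq_one_of_faceGraph_adj hF
  exact SimpleGraph.two_colorable_iff_forall_loop_even.mp hbip v c

theorem stmt5 {N : ℕ} (G : SimpleGraph (Fin N)) (hG : G.Connected)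
    (α : Fin N → ℝ) (F : Set (Fin N → ℝ))
    (hmin : ∀ x ∈ nabla G, -1 ≤ inn x α)
    (hFdef : F = {x | x ∈ nabla G ∧ inn x α = -1})
    (v : Fin N) (c : (faceGraph F).Walk v v) (hc : c.IsCycle) :
    Even c.length :=
  stmt5_general G α F hFdef v c
end

section
/- Let G be a connected graph, F a facet of ∇_G with primitive (integer) inner normal α, and let O⃗ be a cycle in G with a coherent orientation. Then the number of oriented edges of the directed facet subgraph G⃗_F that agree with the orientation of O⃗ equals the number that disagree: |E(G⃗_F) ∩ E(O⃗)| = |E(G⃗_F) ∩ E(−O⃗)|. -/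
/-! The normal `α` of the facet is a potential on the vertices: an edge `i → j` of `G` lies in `F`
exactly when `α j = α i + 1`, and the facet inequality bounds `|α i - α j| ≤ 1` on every edge.
Since `F` is a facet its face graph is connected (a disconnected one spans too few dimensions),
and `α` moves by `±1` along its edges, so all differences of `α` are integers. Hence `α` moves by
`-1`, `0` or `1` along each edge of the closed walk; these steps sum to zero, so the edges
traversed along `F` forwards are as many as those traversed backwards. -/

open Module Submodule

lemma vectorSpan_lt_span {R V : Type*} [Ring R] [AddCommGroup V] [Module R V]
    {s : Set V} (φ : V →ₗ[R] R) {c : R} (hc : c ≠ 0) (hs : ∀ x ∈ s, φ x = c)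
    (hne : s.Nonempty) : vectorSpan R s < span R s := by
  obtain ⟨x₀, hx₀⟩ := hne
  have hle : vectorSpan R s ≤ LinearMap.ker φ := by
    rw [vectorSpan_def, span_le]
    rintro _ ⟨a, ha, b, hb, rfl⟩
    simp [hs a ha, hs b hb]
  refine lt_of_le_of_ne ?_ fun h ↦ hc ?_
  · rw [vectorSpan_def, span_le]
    rintro _ ⟨a, ha, b, hb, rfl⟩
    exact sub_mem (subset_span ha) (subset_span hb)
  · rw [← hs x₀ hx₀]
    exact hle (h ▸ subset_span hx₀)

lemma SimpleGraph.Reachable.sub_mem {V A : Type*} [AddGroup A] {H : SimpleGraph V}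
    (K : AddSubgroup A) {f : V → A} (hf : ∀ a b, H.Adj a b → f a - f b ∈ K) {i j : V}
    (h : H.Reachable i j) : f i - f j ∈ K := by
  obtain ⟨p⟩ := h
  induction p with
  | nil => simp
  | cons hab _ ih => simpa using K.add_mem (hf _ _ hab) ih

lemma card_ascents_sub_card_descents {n : ℕ} (f : ℕ → ℝ)
    (hstep : ∀ r < n, f (r + 1) = f r + 1 ∨ f (r + 1) = f r ∨ f r = f (r + 1) + 1) :
    (Nat.card {r : Fin n // f (r + 1) = f r + 1} : ℝ) -
      Nat.card {r : Fin n // f r = f (r + 1) + 1} = f n - f 0 := by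
  classical
  simp only [Nat.card_eq_fintype_card, Fintype.card_subtype, Finset.natCast_card_filter,
    ← Finset.sum_sub_distrib, ← Finset.sum_range_sub f n]
  rw [← Fin.sum_univ_eq_sum_range (fun r ↦ f (r + 1) - f r)]
  refine Finset.sum_congr rfl fun r _ ↦ ?_
  rcases hstep r r.isLt with h | h | h <;> norm_num [h, add_assoc]

section Facet

variable {N : ℕ} {G : SimpleGraph (Fin N)} {F : Set (Fin N → ℝ)} {α : Fin N → ℝ}

lemma inn_eq_dotProduct (x α : Fin N → ℝ) : inn x α = α ⬝ᵥ x :=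
  dotProduct_comm x α

lemma inn_stdBasis_sub (α : Fin N → ℝ) (i j : Fin N) :
    inn (stdBasis i - stdBasis j) α = α i - α j := by
  simp [inn_eq_dotProduct, stdBasis, dotProduct_sub]

/-- The edge vectors lie in the kernels of the all-ones functional and of the indicator of the
component of `i`, and these two functionals are independent since `j` lies outside it. -/
lemma finrank_span_nabla_le_of_not_reachable {H : SimpleGraph (Fin N)} {i j : Fin N}
    (hij : ¬ H.Reachable i j) : finrank ℝ (span ℝ (nabla H)) ≤ N - 2 := by
  classical
  set β : Fin N → ℝ := fun k ↦ if H.Reachable i k then 1 else 0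
  set φ := (dotProductEquiv ℝ (Fin N) β).prod (dotProductEquiv ℝ (Fin N) 1)
  have hφ : Function.Surjective φ := by
    rintro ⟨a, b⟩
    refine ⟨a • stdBasis i + (b - a) • stdBasis j, ?_⟩
    simp [φ, β, stdBasis, hij, dotProduct_add]
  have hker : finrank ℝ (LinearMap.ker φ) = N - 2 := by
    have := LinearMap.finrank_range_add_finrank_ker φ
    rw [LinearMap.range_eq_top.mpr hφ, finrank_top] at this
    simp at this
    omega
  rw [← hker]
  refine finrank_mono (span_le.mpr ?_)
  rintro _ ⟨a, b, hab, rfl⟩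
  have hβ : β a = β b := by
    simp only [β]
    congr 1
    exact propext ⟨fun h ↦ h.trans hab.reachable, fun h ↦ h.trans hab.symm.reachable⟩
  simp [φ, stdBasis, dotProduct_sub, hβ]

lemma subset_nabla_faceGraph (hF : F ⊆ nabla G) : F ⊆ nabla (faceGraph F) := by
  intro x hx
  obtain ⟨a, b, hab, rfl⟩ := hF hx
  exact ⟨a, b, ⟨hab.ne, Or.inl hx⟩, rfl⟩

/-- Lying on the hyperplane `inn x α = -1`, the face spans one dimension more linearly than
affinely, i.e. `N - 1`; a disconnected face graph spans at most `N - 2`. -/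
lemma preconnected_faceGraph (hF : F ⊆ nabla G) (hFα : ∀ x ∈ F, inn x α = -1)
    (hne : F.Nonempty) (hrank : finrank ℝ (vectorSpan ℝ F) = N - 2) :
    (faceGraph F).Preconnected := by
  intro i j
  by_contra hij
  have hlt := finrank_lt_finrank_of_lt <|
    vectorSpan_lt_span (dotProductEquiv ℝ (Fin N) α) (by norm_num : (-1 : ℝ) ≠ 0)
      (fun x hx ↦ by simpa [inn_eq_dotProduct] using hFα x hx) hne
  have hle := (finrank_mono (span_mono (subset_nabla_faceGraph hF))).trans
    (finrank_span_nabla_le_of_not_reachable hij)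
  omega

lemma sub_mem_zmultiples_of_isFacet (hF : F ⊆ nabla G) (hFα : ∀ x ∈ F, inn x α = -1)
    (hne : F.Nonempty) (hrank : finrank ℝ (vectorSpan ℝ F) = N - 2) (i j : Fin N) :
    α i - α j ∈ AddSubgroup.zmultiples (1 : ℝ) := by
  refine (preconnected_faceGraph hF hFα hne hrank i j).sub_mem _ ?_
  rintro a b ⟨-, hab | hab⟩ <;> have h := hFα _ hab <;> rw [inn_stdBasis_sub] at h
  · exact ⟨-1, by simp [h]⟩
  · exact ⟨1, by simp; linarith⟩

lemma step_trichotomy_of_isFacet (hα : ∀ x ∈ nabla G, -1 ≤ inn x α) (hF : F ⊆ nabla G)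
    (hFα : ∀ x ∈ F, inn x α = -1) (hne : F.Nonempty) (hrank : finrank ℝ (vectorSpan ℝ F) = N - 2)
    {i j : Fin N} (hij : G.Adj i j) : α j = α i + 1 ∨ α j = α i ∨ α i = α j + 1 := by
  obtain ⟨k, hk⟩ :=
    AddSubgroup.mem_zmultiples_iff.mp (sub_mem_zmultiples_of_isFacet hF hFα hne hrank i j)
  have hlo := hα _ ⟨i, j, hij, rfl⟩
  have hhi := hα _ ⟨j, i, hij.symm, rfl⟩
  rw [inn_stdBasis_sub] at hlo hhi
  rw [zsmul_one] at hk
  have hk_lo : -1 ≤ k := by exact_mod_cast (by linarith : (-1 : ℝ) ≤ k)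
  have hk_hi : k ≤ 1 := by exact_mod_cast (by linarith : (k : ℝ) ≤ 1)
  obtain rfl | rfl | rfl : k = -1 ∨ k = 0 ∨ k = 1 := by omega
  · left; push_cast at hk; linarith
  · right; left; push_cast at hk; linarith
  · right; right; push_cast at hk; linarith

end Facet

theorem stmt9_general {N : ℕ} (G : SimpleGraph (Fin N))
    (F : Set (Fin N → ℝ)) (hF : IsFacet G F)
    (v : Fin N) (c : G.Walk v v) :
    Nat.card {r : Fin c.length //
        stdBasis (c.getVert (r : ℕ)) - stdBasis (c.getVert ((r : ℕ) + 1)) ∈ F} =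
    Nat.card {r : Fin c.length //
        stdBasis (c.getVert ((r : ℕ) + 1)) - stdBasis (c.getVert (r : ℕ)) ∈ F} := by
  obtain ⟨⟨α, hα, hFeq⟩, hrank⟩ := hF
  rcases F.eq_empty_or_nonempty with rfl | hne
  · simp
  have hmem : ∀ {i j}, G.Adj i j → (stdBasis i - stdBasis j ∈ F ↔ α j = α i + 1) := by
    intro i j hij
    rw [hFeq]
    show _ ∧ _ ↔ _
    rw [inn_stdBasis_sub]
    exact ⟨fun h ↦ by linarith [h.2], fun h ↦ ⟨⟨i, j, hij, rfl⟩, by linarith⟩⟩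
  have hcount := card_ascents_sub_card_descents (fun r ↦ α (c.getVert r)) fun r hr ↦
    step_trichotomy_of_isFacet hα (hFeq ▸ fun x hx ↦ hx.1) (hFeq ▸ fun x hx ↦ hx.2) hne hrank
      (c.adj_getVert_succ hr)
  rw [c.getVert_length, c.getVert_zero, sub_self, sub_eq_zero] at hcount
  rw [Nat.card_congr (Equiv.subtypeEquivRight fun r ↦ hmem (c.adj_getVert_succ r.isLt)),
    Nat.card_congr (Equiv.subtypeEquivRight fun r ↦ hmem (c.adj_getVert_succ r.isLt).symm)]
  exact_mod_cast hcount

theorem stmt9 {N : ℕ} (G : SimpleGraph (Fin N)) (hG : G.Connected)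
    (F : Set (Fin N → ℝ)) (hF : IsFacet G F)
    (v : Fin N) (c : G.Walk v v) (hc : c.IsCycle) :
    Nat.card {r : Fin c.length //
        stdBasis (c.getVert (r : ℕ)) - stdBasis (c.getVert ((r : ℕ) + 1)) ∈ F} =
    Nat.card {r : Fin c.length //
        stdBasis (c.getVert ((r : ℕ) + 1)) - stdBasis (c.getVert (r : ℕ)) ∈ F} :=
  stmt9_general G F hF v c
end

section
/- Let F be a proper face of ∇_G. Then F is affinely independent if and only if G_F is a forest. -/
/-! Every vector of a face lies on the hyperplane `⟨α, x⟩ = -1`, which misses the origin, so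
affine and linear independence of the face coincide. The face consists of vectors `e i - e j`,
one orientation per edge of `G_F`. If the edge `ij` is not a bridge of `G_F`, a path from `i` to
`j` avoiding it writes `e i - e j` as a signed sum of the other vectors; if it is a bridge, the
indicator of the side of `i` is a functional that is `1` on `e i - e j` and `0` on the rest of
the face. So the face is linearly independent iff every edge of `G_F` is a bridge, i.e. iff `G_F`
is a forest. -/

lemma stdBasis_sub_stdBasis_inj {N : ℕ} {a b i j : Fin N} (hab : a ≠ b)
    (h : stdBasis a - stdBasis b = (stdBasis i - stdBasis j : Fin N → ℝ)) : a = i ∧ b = j := by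
  have ha := congrFun h a
  have hb := congrFun h b
  simp only [stdBasis, Pi.sub_apply, Pi.single_apply] at ha hb
  grind

lemma dotProduct_stdBasis_sub {N : ℕ} (φ : Fin N → ℝ) (i j : Fin N) :
    φ ⬝ᵥ (stdBasis i - stdBasis j) = φ i - φ j := by
  simp [stdBasis, dotProduct_sub]

theorem SimpleGraph.Reachable.sub_mem_of_forall_adj {V M S : Type*} [AddGroup M] [SetLike S M]
    [AddSubgroupClass S M] {G : SimpleGraph V} {f : V → M} {P : S}
    (hG : ∀ a b, G.Adj a b → f a - f b ∈ P) {a b : V} (h : G.Reachable a b) : f a - f b ∈ P := by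
  obtain ⟨p⟩ := h
  induction p with
  | nil => simp
  | cons hab _ ih => rw [← sub_add_sub_cancel]; exact add_mem (hG _ _ hab) ih

theorem affineIndependent_iff_linearIndependent_of_forall_eq {k V ι : Type*} [Ring k]
    [NoZeroDivisors k] [AddCommGroup V] [Module k V] {v : ι → V} (f : V →ₗ[k] k) {c : k}
    (hc : c ≠ 0) (hf : ∀ i, f (v i) = c) : AffineIndependent k v ↔ LinearIndependent k v := by
  refine ⟨fun h => linearIndependent_iff'.mpr fun s g hg => ?_,
    LinearIndependent.affineIndependent k⟩
  refine affineIndependent_iff.mp h s g ?_ hg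
  have := congrArg f hg
  simp only [map_sum, map_smul, hf, smul_eq_mul, map_zero, ← Finset.sum_mul] at this
  exact (mul_eq_zero.mp this).resolve_right hc

section OrientedEdges

open SimpleGraph

variable {N : ℕ} {S : Set (Fin N → ℝ)}

theorem stdBasis_sub_mem_span_of_not_isBridge {i j : Fin N}
    (h : ¬ (faceGraph S).IsBridge s(i, j)) :
    stdBasis i - stdBasis j ∈ Submodule.span ℝ (S \ {stdBasis i - stdBasis j}) := by
  set x₀ : Fin N → ℝ := stdBasis i - stdBasis j
  have hmem : ∀ {a b}, s(a, b) ≠ s(i, j) → stdBasis a - stdBasis b ∈ S → a ≠ b →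
      stdBasis a - stdBasis b ∈ Submodule.span ℝ (S \ {x₀}) := fun hne hS hab =>
    Submodule.subset_span ⟨hS, fun hx => hne <| by
      obtain ⟨rfl, rfl⟩ := stdBasis_sub_stdBasis_inj hab hx; rfl⟩
  refine (not_not.mp h).sub_mem_of_forall_adj fun a b hab => ?_
  obtain ⟨⟨hab, hne⟩, hsub⟩ := (deleteEdges_adj.mp hab).imp_left (fromRel_adj _ _ _).mp
  rw [Set.mem_singleton_iff] at hsub
  rcases hne with hS | hS
  · exact hmem hsub hS hab
  · rw [← neg_sub]
    exact neg_mem (hmem (Sym2.eq_swap ▸ hsub) hS hab.symm)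

theorem stdBasis_sub_notMem_span_of_isBridge
    (hS : ∀ x ∈ S, ∃ a b, a ≠ b ∧ x = stdBasis a - stdBasis b) (hanti : ∀ x ∈ S, -x ∉ S)
    {i j : Fin N} (hx₀ : stdBasis i - stdBasis j ∈ S) (h : (faceGraph S).IsBridge s(i, j)) :
    stdBasis i - stdBasis j ∉ Submodule.span ℝ (S \ {stdBasis i - stdBasis j}) := by
  classical
  set H := (faceGraph S).deleteEdges {s(i, j)}
  set φ : Fin N → ℝ := fun z => if H.Reachable i z then 1 else 0
  have hzero : ∀ x ∈ S \ {stdBasis i - stdBasis j}, φ ⬝ᵥ x = 0 := by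
    rintro x ⟨hx, hne⟩
    obtain ⟨a, b, hab, rfl⟩ := hS x hx
    have hadj : H.Adj a b := by
      refine deleteEdges_adj.mpr ⟨(fromRel_adj _ _ _).mpr ⟨hab, .inl hx⟩, fun he => ?_⟩
      rcases Sym2.eq_iff.mp (Set.mem_singleton_iff.mp he) with ⟨rfl, rfl⟩ | ⟨rfl, rfl⟩
      · exact hne rfl
      · exact hanti _ hx (by rwa [neg_sub])
    have : H.Reachable i a ↔ H.Reachable i b :=
      ⟨(·.trans hadj.reachable), (·.trans hadj.reachable.symm)⟩
    have : φ a = φ b := by simp only [φ, this]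
    rw [dotProduct_stdBasis_sub, this, sub_self]
  intro hspan
  have := (Submodule.span_le (p := LinearMap.ker (dotProductEquiv ℝ (Fin N) φ))).mpr hzero hspan
  rw [LinearMap.mem_ker, dotProductEquiv_apply_apply, dotProduct_stdBasis_sub] at this
  have hij : ¬ H.Reachable i j := isBridge_iff.mp h
  simp [φ, hij] at this

theorem linearIndepOn_id_iff_isAcyclic
    (hS : ∀ x ∈ S, ∃ a b, a ≠ b ∧ x = stdBasis a - stdBasis b) (hanti : ∀ x ∈ S, -x ∉ S) :
    LinearIndepOn ℝ id S ↔ (faceGraph S).IsAcyclic := by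
  rw [linearIndepOn_iff_notMem_span, isAcyclic_iff_forall_adj_isBridge]
  simp only [id_eq, Set.image_id']
  constructor
  · intro h v w hvw
    obtain ⟨-, hvw | hwv⟩ := (fromRel_adj _ _ _).mp hvw
    · exact not_not.mp fun hb => h _ hvw (stdBasis_sub_mem_span_of_not_isBridge hb)
    · rw [Sym2.eq_swap]
      exact not_not.mp fun hb => h _ hwv (stdBasis_sub_mem_span_of_not_isBridge hb)
  · intro h x hx
    obtain ⟨a, b, hab, rfl⟩ := hS x hx
    exact stdBasis_sub_notMem_span_of_isBridge hS hanti hx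
      (h ((fromRel_adj _ _ _).mpr ⟨hab, .inl hx⟩))

end OrientedEdges

theorem IsFace.exists_dual_eq_neg_one {N : ℕ} {G : SimpleGraph (Fin N)} {F : Set (Fin N → ℝ)}
    (hF : IsFace G F) : ∃ ψ : Module.Dual ℝ (Fin N → ℝ), ∀ x ∈ F, ψ x = -1 := by
  obtain ⟨α, -, rfl⟩ := hF
  exact ⟨dotProductEquiv ℝ (Fin N) α, fun x hx => by
    rw [dotProductEquiv_apply_apply, dotProduct_comm]; exact hx.2⟩

theorem IsFace.exists_eq_stdBasis_sub {N : ℕ} {G : SimpleGraph (Fin N)} {F : Set (Fin N → ℝ)}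
    (hF : IsFace G F) : ∀ x ∈ F, ∃ i j, i ≠ j ∧ x = stdBasis i - stdBasis j := by
  obtain ⟨α, -, rfl⟩ := hF
  rintro x ⟨⟨i, j, hij, rfl⟩, -⟩
  exact ⟨i, j, hij.ne, rfl⟩

theorem stmt15_general {N : ℕ} (G : SimpleGraph (Fin N))
    (F : Set (Fin N → ℝ)) (hF : IsFace G F) :
    AffineIndependent ℝ (fun x : F => (x : Fin N → ℝ)) ↔ (faceGraph F).IsAcyclic := by
  obtain ⟨ψ, hψ⟩ := hF.exists_dual_eq_neg_one
  have hanti : ∀ x ∈ F, -x ∉ F := fun x hx hx' => by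
    have := hψ _ hx'
    rw [map_neg, hψ x hx] at this
    norm_num at this
  rw [affineIndependent_iff_linearIndependent_of_forall_eq ψ (by norm_num) fun x : F => hψ x x.2]
  exact linearIndepOn_id_iff_isAcyclic hF.exists_eq_stdBasis_sub hanti

theorem stmt15 {N : ℕ} (G : SimpleGraph (Fin N)) (hG : G.Connected)
    (F : Set (Fin N → ℝ)) (hF : IsFace G F) :
    AffineIndependent ℝ (fun x : F => (x : Fin N → ℝ)) ↔ (faceGraph F).IsAcyclic :=
  stmt15_general G F hF
end

section
/- For a proper face F of ∇_G, dim(conv F) = |V(G_F)| − k − 1, where k is the number of connected components of G_F. -/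
/-!
The points of `F` are the columns of the incidence matrix of the digraph `G⃗_F`, and they all lie
on the affine hyperplane `inn x α = -1`, which misses the origin; hence the affine dimension of `F`
is one less than the rank of that matrix. A vector `x` is killed by the incidence map exactly when
`x i = x j` along every edge, i.e. when it is constant on each connected component of `G_F` and
arbitrary at the vertices outside `V(G_F)`; so the kernel has dimension `k + N - |V(G_F)|`.
-/
open Module Matrix

theorem finrank_vectorSpan_add_one_eq_finrank_span {k V : Type*} [Field k] [AddCommGroup V]
    [Module k V] [FiniteDimensional k V] {s : Set V} (hs : s.Nonempty) (f : Dual k V) {c : k}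
    (hc : c ≠ 0) (hf : ∀ x ∈ s, f x = c) :
    finrank k (vectorSpan k s) + 1 = finrank k (Submodule.span k s) := by
  obtain ⟨x₀, hx₀⟩ := hs
  have hx₀_ne : x₀ ≠ 0 := by rintro rfl; exact hc (by simpa using (hf 0 hx₀).symm)
  have hle_ker : vectorSpan k s ≤ LinearMap.ker f := by
    rw [vectorSpan_def, Submodule.span_le]
    rintro _ ⟨x, hx, y, hy, rfl⟩
    simp [hf x hx, hf y hy]
  have hdisj : Disjoint (vectorSpan k s) (k ∙ x₀) :=
    (Submodule.disjoint_span_singleton' hx₀_ne).mpr fun h => hc <| by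
      simpa [hf x₀ hx₀] using hle_ker h
  have hsup : vectorSpan k s ⊔ k ∙ x₀ = Submodule.span k s := by
    refine le_antisymm (sup_le ?_ ?_) (Submodule.span_le.mpr fun x hx => ?_)
    · rw [vectorSpan_def, Submodule.span_le]
      rintro _ ⟨x, hx, y, hy, rfl⟩
      exact Submodule.sub_mem _ (Submodule.subset_span hx) (Submodule.subset_span hy)
    · exact Submodule.span_mono (Set.singleton_subset_iff.mpr hx₀)
    · rw [← sub_add_cancel x x₀]
      exact Submodule.add_mem_sup (vsub_mem_vectorSpan k hx hx₀)
        (Submodule.mem_span_singleton_self x₀)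
  rw [← hsup, ← finrank_span_singleton (K := k) hx₀_ne,
    ← Submodule.finrank_sup_add_finrank_inf_eq, hdisj.eq_bot, finrank_bot, add_zero]

namespace SimpleGraph

variable {V : Type*}

theorem Reachable.apply_eq_of_forall_adj {G : SimpleGraph V} {β : Type*} {f : V → β}
    (hf : ∀ i j, G.Adj i j → f i = f j) {u v : V} (h : G.Reachable u v) : f u = f v := by
  obtain ⟨p⟩ := h
  induction p with
  | nil => rfl
  | cons hadj _ ih => exact (hf _ _ hadj).trans ih

variable (K : Type*) [Field K] (H : SimpleGraph V)

open Classical in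
noncomputable def extendOfComponents :
    ((H.induce H.support).ConnectedComponent → K) × (↥H.supportᶜ → K) →ₗ[K] V → K :=
  LinearMap.pi fun v => if hv : v ∈ H.support then
      (LinearMap.proj ((H.induce H.support).connectedComponentMk ⟨v, hv⟩)).comp
        (LinearMap.fst ..)
    else (LinearMap.proj (⟨v, hv⟩ : ↥H.supportᶜ)).comp (LinearMap.snd ..)

variable {K H}

theorem extendOfComponents_apply_of_mem (p) {v : V} (hv : v ∈ H.support) :
    H.extendOfComponents K p v = p.1 ((H.induce H.support).connectedComponentMk ⟨v, hv⟩) := by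
  simp [extendOfComponents, hv]

theorem extendOfComponents_apply_of_notMem (p) {v : V} (hv : v ∉ H.support) :
    H.extendOfComponents K p v = p.2 ⟨v, hv⟩ := by
  simp [extendOfComponents, hv]

theorem extendOfComponents_injective : Function.Injective (H.extendOfComponents K) := by
  rw [← LinearMap.ker_eq_bot, LinearMap.ker_eq_bot']
  rintro ⟨f, g⟩ h
  refine Prod.ext (funext fun c => ?_) (funext fun v => ?_)
  · induction c using ConnectedComponent.ind with
    | h v => simpa [extendOfComponents_apply_of_mem] using congrFun h v
  · simpa [extendOfComponents_apply_of_notMem (f, g) v.2] using congrFun h v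

variable [Fintype V] [DecidableEq V]

variable (K H) in
/-- The transpose of the incidence matrix, with every edge taken in both orientations: this
changes neither the span of the edge vectors nor the rank. -/
def dartIncMatrix : Matrix H.Dart V K := fun d => Pi.single d.fst 1 - Pi.single d.snd 1

theorem dartIncMatrix_mulVec (x : V → K) (d : H.Dart) :
    (H.dartIncMatrix K *ᵥ x) d = x d.fst - x d.snd := by
  change (Pi.single d.fst 1 - Pi.single d.snd 1 : V → K) ⬝ᵥ x = _
  simp [sub_dotProduct]

theorem mem_ker_dartIncMatrix {x : V → K} :
    x ∈ LinearMap.ker (H.dartIncMatrix K).mulVecLin ↔ ∀ i j, H.Adj i j → x i = x j := by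
  simp only [LinearMap.mem_ker, Matrix.mulVecLin_apply, funext_iff, dartIncMatrix_mulVec,
    Pi.zero_apply, sub_eq_zero]
  exact ⟨fun h i j hij => h ⟨(i, j), hij⟩, fun h d => h _ _ d.adj⟩

theorem range_extendOfComponents :
    LinearMap.range (H.extendOfComponents K) = LinearMap.ker (H.dartIncMatrix K).mulVecLin := by
  ext x
  rw [mem_ker_dartIncMatrix]
  constructor
  · rintro ⟨p, rfl⟩ i j hij
    have hi : i ∈ H.support := ⟨j, hij⟩
    have hj : j ∈ H.support := ⟨i, hij.symm⟩
    rw [extendOfComponents_apply_of_mem p hi, extendOfComponents_apply_of_mem p hj,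
      ConnectedComponent.connectedComponentMk_eq_of_adj (G := H.induce H.support)
        (v := ⟨i, hi⟩) (w := ⟨j, hj⟩) hij]
  · intro hx
    refine ⟨(ConnectedComponent.lift (fun v : H.support => x v) fun v w p _ =>
      p.reachable.apply_eq_of_forall_adj (f := fun v : H.support => x v) fun i j => hx i j,
      fun v => x v), funext fun v => ?_⟩
    by_cases hv : v ∈ H.support
    · simp [extendOfComponents_apply_of_mem _ hv]
    · simp [extendOfComponents_apply_of_notMem _ hv]

theorem finrank_ker_dartIncMatrix :
    finrank K (LinearMap.ker (H.dartIncMatrix K).mulVecLin)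
      = Nat.card (H.induce H.support).ConnectedComponent + H.supportᶜ.ncard := by
  classical
  rw [← range_extendOfComponents, LinearMap.finrank_range_of_inj extendOfComponents_injective,
    finrank_prod, finrank_fintype_fun_eq_card, finrank_fintype_fun_eq_card,
    Nat.card_eq_fintype_card, Set.ncard_eq_toFinset_card', Set.toFinset_card]

theorem rank_dartIncMatrix :
    (H.dartIncMatrix K).rank + Nat.card (H.induce H.support).ConnectedComponent
      = H.support.ncard := by
  have := LinearMap.finrank_range_add_finrank_ker (H.dartIncMatrix K).mulVecLin
  rw [finrank_ker_dartIncMatrix, finrank_fintype_fun_eq_card, ← Nat.card_eq_fintype_card,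
    ← Set.ncard_add_ncard_compl H.support] at this
  rw [Matrix.rank]
  omega

end SimpleGraph

theorem SimpleGraph.finrank_span_nabla_add_card {N : ℕ} (H : SimpleGraph (Fin N)) :
    finrank ℝ (Submodule.span ℝ (nabla H))
      + Nat.card (H.induce H.support).ConnectedComponent = H.support.ncard := by
  classical
  have hrow : nabla H = Set.range (H.dartIncMatrix ℝ).row := by
    ext x
    exact ⟨fun ⟨i, j, hij, hx⟩ => ⟨⟨(i, j), hij⟩, hx.symm⟩,
      fun ⟨d, hd⟩ => ⟨d.fst, d.snd, d.adj, hd.symm⟩⟩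
  rw [hrow, ← rank_eq_finrank_span_row, H.rank_dartIncMatrix]

theorem span_eq_span_nabla_faceGraph {N : ℕ} {G : SimpleGraph (Fin N)} {F : Set (Fin N → ℝ)}
    (hF : F ⊆ nabla G) : Submodule.span ℝ F = Submodule.span ℝ (nabla (faceGraph F)) := by
  refine le_antisymm (Submodule.span_mono fun x hx => ?_) (Submodule.span_le.mpr ?_)
  · obtain ⟨i, j, hij, rfl⟩ := hF hx
    exact ⟨i, j, (SimpleGraph.fromRel_adj ..).mpr ⟨hij.ne, Or.inl hx⟩, rfl⟩
  · rintro _ ⟨i, j, hij, rfl⟩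
    rcases ((SimpleGraph.fromRel_adj ..).mp hij).2 with h | h
    · exact Submodule.subset_span h
    · rw [← neg_sub]
      exact Submodule.neg_mem _ (Submodule.subset_span h)

theorem stmt17_general {N : ℕ} (G : SimpleGraph (Fin N))
    (F : Set (Fin N → ℝ)) (hF : IsFace G F) (hne : F.Nonempty) :
    Module.finrank ℝ (vectorSpan ℝ F) +
      Nat.card (SimpleGraph.induce (faceGraph F).support (faceGraph F)).ConnectedComponent + 1
      = (faceGraph F).support.ncard := by
  obtain ⟨α, -, hFα⟩ := hF
  have hFG : F ⊆ nabla G := by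
    rw [hFα]
    exact fun x hx => hx.1
  have hdim := finrank_vectorSpan_add_one_eq_finrank_span hne (dotProductEquiv ℝ (Fin N) α)
    (c := -1) (by norm_num) fun x hx => by
      rw [hFα] at hx
      exact (dotProduct_comm α x).trans hx.2
  rw [span_eq_span_nabla_faceGraph hFG] at hdim
  have hrank := (faceGraph F).finrank_span_nabla_add_card
  omega

theorem stmt17 {N : ℕ} (G : SimpleGraph (Fin N)) (hG : G.Connected)
    (F : Set (Fin N → ℝ)) (hF : IsFace G F) (hne : F.Nonempty) :
    Module.finrank ℝ (vectorSpan ℝ F) +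
      Nat.card (SimpleGraph.induce (faceGraph F).support (faceGraph F)).ConnectedComponent + 1
      = (faceGraph F).support.ncard :=
  stmt17_general G F hF hne
end
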